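/- Let E be an affine variety with a polynomial ℂ×-action having a unique fixed point 0, and let a reductive group H act on E from the left, commuting with the ℂ×-action. Then the GIT quotient E // H, with the induced ℂ×-action, has a unique ℂ×-fixed point, namely the image π(0) of 0 under the quotient map. -/
import Mathlib


/-- E affine variety with a polynomial ℂ×-action with unique fixed point
`z`; a reductive group H acts on E commuting with the ℂ×-action; `π : E → Q` is the
affine GIT quotient E // H (characterized here by: π is a surjective continuous map
such that `π a = π b` iff the closures of the H-orbits of a and b intersect; Q is an
affine variety, in particular T1).  Then the induced ℂ×-action on Q has `π z` as its
unique fixed point. -/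
theorem statement3 {E Q H : Type*} [TopologicalSpace E] [Group H] [MulAction H E]
    [TopologicalSpace Q] [T1Space Q]
    (act : ℂ × E → E) (hcont : Continuous act)
    (hone : ∀ e : E, act (1, e) = e)
    (hmul : ∀ (s t : ℂ) (e : E), act (s, act (t, e)) = act (s * t, e))
    (hcomm : ∀ (h : H) (t : ℂ) (e : E), h • act (t, e) = act (t, h • e))
    (z : E) (hfix : ∀ t : ℂ, t ≠ 0 → act (t, z) = z)
    (huniq : ∀ p : E, (∀ t : ℂ, t ≠ 0 → act (t, p) = p) → p = z)
    (π : E → Q) (hπsurj : Function.Surjective π) (hπcont : Continuous π)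
    (hGIT : ∀ a b : E, π a = π b ↔
      (closure (MulAction.orbit H a) ∩ closure (MulAction.orbit H b)).Nonempty)
    (actQ : ℂ → Q → Q)
    (hequiv : ∀ t : ℂ, t ≠ 0 → ∀ e : E, π (act (t, e)) = actQ t (π e)) :
    (∀ t : ℂ, t ≠ 0 → actQ t (π z) = π z) ∧
      ∀ q : Q, (∀ t : ℂ, t ≠ 0 → actQ t q = q) → q = π z := by
  constructor
  · intro t ht
    rw [← hequiv t ht z, hfix t ht]
  · intro q hq
    obtain ⟨e, he⟩ := hπsurj q
    have hz0 : act (0, e) = z := by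
      apply huniq
      intro t ht
      rw [hmul, mul_zero]
    have hclosed : IsClosed {t : ℂ | π (act (t, e)) = q} :=
      isClosed_singleton.preimage
        (hπcont.comp (hcont.comp (continuous_id.prodMk continuous_const)))
    have hsub : ({0}ᶜ : Set ℂ) ⊆ {t : ℂ | π (act (t, e)) = q} := by
      intro t ht
      simp only [Set.mem_compl_iff, Set.mem_singleton_iff] at ht
      simp only [Set.mem_setOf_eq, hequiv t ht e, he, hq t ht]
    have h0 : (0 : ℂ) ∈ {t : ℂ | π (act (t, e)) = q} := by
      have := closure_minimal hsub hclosed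
      rw [(dense_compl_singleton (0 : ℂ)).closure_eq] at this
      exact this (Set.mem_univ _)
    rw [Set.mem_setOf_eq, hz0] at h0
    exact h0.symm
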